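/- Let 0 < α < 2 be real, let γ ∈ ℤ² be nonzero, and let c : ℤ² → ℂ be such that c(k) = 0 whenever ⟨k,γ⟩ ≠ 0, and such that for every N ∈ ℕ there exists C_N > 0 with |c(k)| ≤ C_N·(1 + ‖k‖)^{−N} for all k ∈ ℤ². Then the sums S_n := ∑_{k ∈ ℤ²} |c(k)|²·( ‖n·γ + k‖^α − n^α·‖γ‖^α )² are finite and S_n → 0 as n → ∞. -/

import Mathlib

/-!
For `k ⊥ γ` Pythagoras gives `‖nγ + k‖^α - ‖nγ‖^α = (a + ‖k‖²)^(α/2) - a^(α/2)` with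
`a = n²‖γ‖²`. Since `α/2 < 1`, this is at most `‖k‖^α` (subadditivity of `x ↦ x^(α/2)`) and it
tends to `0` as `a → ∞` (it is `O(a^(α/2 - 1))` by Bernoulli's inequality). The rapid decay of `c`
makes `‖k‖^(2α)|c(k)|²` summable over `ℤ²`, so dominated convergence gives `S_n → 0`.
-/

noncomputable def latticeToEuclidean2 (k : Fin 2 → ℤ) : EuclideanSpace ℝ (Fin 2) :=
  WithLp.toLp 2 (fun i => (k i : ℝ))

open Real Filter Topology

namespace Real

lemma rpow_add_sub_rpow_le_mul {a b s : ℝ} (ha : 0 < a) (hb : 0 ≤ b) (hs0 : 0 ≤ s)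
    (hs1 : s ≤ 1) : (a + b) ^ s - a ^ s ≤ s * b * a ^ (s - 1) := by
  have hbern : (1 + b / a) ^ s ≤ 1 + s * (b / a) :=
    rpow_one_add_le_one_add_mul_self (by linarith [div_nonneg hb ha.le]) hs0 hs1
  calc (a + b) ^ s - a ^ s = a ^ s * ((1 + b / a) ^ s - 1) := by
        rw [mul_sub, ← mul_rpow ha.le (by positivity), mul_add, mul_one, mul_div_cancel₀ _ ha.ne',
          mul_one]
    _ ≤ a ^ s * (s * (b / a)) := by gcongr; linarith
    _ = s * b * a ^ (s - 1) := by rw [rpow_sub_one ha.ne']; ring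

lemma tendsto_rpow_add_sub_rpow_atTop {b s : ℝ} (hb : 0 ≤ b) (hs0 : 0 ≤ s) (hs1 : s < 1) :
    Tendsto (fun a : ℝ => (a + b) ^ s - a ^ s) atTop (𝓝 0) := by
  have hdecay : Tendsto (fun a : ℝ => s * b * a ^ (s - 1)) atTop (𝓝 0) := by
    simpa using (tendsto_rpow_neg_atTop (by linarith : 0 < 1 - s)).const_mul (s * b)
      |>.congr' (by filter_upwards with a; rw [neg_sub])
  refine squeeze_zero' ?_ ?_ hdecay
  · filter_upwards [eventually_ge_atTop 0] with a ha
    exact sub_nonneg.2 (rpow_le_rpow ha (by linarith) hs0)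
  · filter_upwards [eventually_gt_atTop 0] with a ha
    exact rpow_add_sub_rpow_le_mul ha hb hs0 hs1.le

lemma sq_rpow_half {x : ℝ} (hx : 0 ≤ x) (α : ℝ) : (x ^ 2) ^ (α / 2) = x ^ α := by
  rw [← rpow_natCast_mul hx]; congr 1; push_cast; ring

end Real

section Orthogonal

variable {E : Type*} [NormedAddCommGroup E] [InnerProductSpace ℝ E] {x y : E}

lemma rpow_norm_smul_add_sub_eq (h : inner ℝ x y = 0) {t : ℝ} (ht : 0 ≤ t) (α : ℝ) :
    ‖t • x + y‖ ^ α - t ^ α * ‖x‖ ^ α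
      = ((t * ‖x‖) ^ 2 + ‖y‖ ^ 2) ^ (α / 2) - ((t * ‖x‖) ^ 2) ^ (α / 2) := by
  have hpyth : ‖t • x + y‖ ^ 2 = (t * ‖x‖) ^ 2 + ‖y‖ ^ 2 := by
    rw [norm_add_sq_real, real_inner_smul_left, h, norm_smul, norm_of_nonneg ht]
    ring
  rw [← hpyth, sq_rpow_half (norm_nonneg _), sq_rpow_half (by positivity),
    mul_rpow ht (norm_nonneg _)]

lemma abs_rpow_norm_smul_add_sub_le (h : inner ℝ x y = 0) {t : ℝ} (ht : 0 ≤ t) {α : ℝ}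
    (hα0 : 0 ≤ α) (hα2 : α ≤ 2) : |‖t • x + y‖ ^ α - t ^ α * ‖x‖ ^ α| ≤ ‖y‖ ^ α := by
  have hs0 : 0 ≤ α / 2 := by linarith
  rw [rpow_norm_smul_add_sub_eq h ht, abs_of_nonneg (sub_nonneg.2 (rpow_le_rpow (by positivity)
    (by linarith [sq_nonneg ‖y‖]) hs0)), sub_le_iff_le_add', ← sq_rpow_half (norm_nonneg y)]
  exact rpow_add_le_add_rpow (by positivity) (by positivity) hs0 (by linarith)

lemma tendsto_rpow_norm_smul_add_sub (h : inner ℝ x y = 0) (hx : x ≠ 0) {α : ℝ}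
    (hα0 : 0 ≤ α) (hα2 : α < 2) :
    Tendsto (fun t : ℝ => ‖t • x + y‖ ^ α - t ^ α * ‖x‖ ^ α) atTop (𝓝 0) := by
  have hsq : Tendsto (fun t : ℝ => (t * ‖x‖) ^ 2) atTop atTop :=
    (tendsto_pow_atTop two_ne_zero).comp (tendsto_id.atTop_mul_const (norm_pos_iff.2 hx))
  refine ((tendsto_rpow_add_sub_rpow_atTop (s := α / 2) (sq_nonneg ‖y‖) (by linarith)
    (by linarith)).comp hsq).congr' ?_
  filter_upwards [eventually_ge_atTop 0] with t ht
  exact (rpow_norm_smul_add_sub_eq h ht α).symm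

/-- Decay of order `4` suffices: the defect is at most `(1 + ‖y‖)²`, and `(1 + ‖y‖)^(-4)` is
still summable over `ℤ²`. -/
lemma sq_mul_sq_rpow_norm_smul_add_sub_le (h : inner ℝ x y = 0) {t : ℝ} (ht : 0 ≤ t) {α : ℝ}
    (hα0 : 0 ≤ α) (hα2 : α ≤ 2) {a C : ℝ} (ha : |a| ≤ C * (1 + ‖y‖) ^ (-(4 : ℝ))) :
    a ^ 2 * (‖t • x + y‖ ^ α - t ^ α * ‖x‖ ^ α) ^ 2 ≤ C ^ 2 * (1 + ‖y‖) ^ (-(4 : ℝ)) := by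
  have hy : 1 ≤ 1 + ‖y‖ := by linarith [norm_nonneg y]
  have hd : |‖t • x + y‖ ^ α - t ^ α * ‖x‖ ^ α| ≤ (1 + ‖y‖) ^ (2 : ℝ) :=
    (abs_rpow_norm_smul_add_sub_le h ht hα0 hα2).trans <|
      (rpow_le_rpow (norm_nonneg y) (by linarith) hα0).trans (rpow_le_rpow_of_exponent_le hy hα2)
  calc a ^ 2 * (‖t • x + y‖ ^ α - t ^ α * ‖x‖ ^ α) ^ 2
      = (|a| * |‖t • x + y‖ ^ α - t ^ α * ‖x‖ ^ α|) ^ 2 := by rw [mul_pow, sq_abs, sq_abs]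
    _ ≤ (C * (1 + ‖y‖) ^ (-(4 : ℝ)) * (1 + ‖y‖) ^ (2 : ℝ)) ^ 2 := by
      gcongr
      exact (abs_nonneg a).trans ha
    _ = C ^ 2 * (1 + ‖y‖) ^ (-(4 : ℝ)) := by
      rw [mul_assoc, ← rpow_add (by linarith), mul_pow, ← rpow_mul_natCast (by linarith)]
      norm_num

end Orthogonal

lemma latticeToEuclidean2_zsmul_add (m : ℤ) (γ k : Fin 2 → ℤ) :
    latticeToEuclidean2 (m • γ + k) = (m : ℝ) • latticeToEuclidean2 γ + latticeToEuclidean2 k := by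
  ext i
  simp [latticeToEuclidean2]

lemma inner_latticeToEuclidean2 (γ k : Fin 2 → ℤ) :
    inner ℝ (latticeToEuclidean2 γ) (latticeToEuclidean2 k) = ((∑ i, k i * γ i : ℤ) : ℝ) := by
  simp [latticeToEuclidean2, PiLp.inner_apply]

lemma norm_le_norm_latticeToEuclidean2 (k : Fin 2 → ℤ) : ‖k‖ ≤ ‖latticeToEuclidean2 k‖ :=
  (pi_norm_le_iff_of_nonneg (norm_nonneg _)).2 fun i => by
    simpa [latticeToEuclidean2, Int.norm_eq_abs] using PiLp.norm_apply_le (latticeToEuclidean2 k) i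

lemma summable_one_add_norm_latticeToEuclidean2_rpow_neg {p : ℝ} (hp : 2 < p) :
    Summable fun k : Fin 2 → ℤ => (1 + ‖latticeToEuclidean2 k‖) ^ (-p) := by
  refine EisensteinSeries.summable_of_isBigO_rpow_norm hp (.of_bound 1 ?_)
  filter_upwards [eventually_cofinite_ne 0] with k hk
  have hk : 0 < ‖k‖ := norm_pos_iff.2 hk
  rw [one_mul, norm_of_nonneg (by positivity), norm_of_nonneg (by positivity), ← rpow_neg hk.le]
  exact rpow_le_rpow_of_nonpos hk (by linarith [norm_le_norm_latticeToEuclidean2 k]) (by linarith)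

/-- **Quasimode estimate for the fractional Schrödinger equation.** If
`c : ℤ² → ℂ` is rapidly decaying and supported in `γ^⊥` for a nonzero `γ ∈ ℤ²`,
then for `0 < α < 2` the sums
`S_n = ∑_k |c(k)|²(‖nγ+k‖^α − n^α‖γ‖^α)²` are finite and tend to `0`. -/
theorem quasimode_sums_tendsto_zero
    (α : ℝ) (hα0 : 0 < α) (hα2 : α < 2)
    (γ : Fin 2 → ℤ) (hγ : γ ≠ 0)
    (c : (Fin 2 → ℤ) → ℂ)
    (hsupp : ∀ k : Fin 2 → ℤ, (∑ i, k i * γ i) ≠ 0 → c k = 0)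
    (hdecay : ∀ N : ℕ, ∃ C : ℝ, 0 < C ∧ ∀ k : Fin 2 → ℤ,
      ‖c k‖ ≤ C * (1 + ‖latticeToEuclidean2 k‖) ^ (-(N : ℝ))) :
    (∀ n : ℕ, Summable fun k : Fin 2 → ℤ =>
      ‖c k‖ ^ 2 *
        (‖latticeToEuclidean2 ((n : ℤ) • γ + k)‖ ^ α
          - (n : ℝ) ^ α * ‖latticeToEuclidean2 γ‖ ^ α) ^ 2) ∧
    Filter.Tendsto (fun n : ℕ => ∑' k : Fin 2 → ℤ,
      ‖c k‖ ^ 2 *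
        (‖latticeToEuclidean2 ((n : ℤ) • γ + k)‖ ^ α
          - (n : ℝ) ^ α * ‖latticeToEuclidean2 γ‖ ^ α) ^ 2)
      Filter.atTop (nhds 0) := by
  obtain ⟨C, -, hC⟩ := hdecay 4
  have hγ' : latticeToEuclidean2 γ ≠ 0 :=
    norm_pos_iff.1 ((norm_pos_iff.2 hγ).trans_le (norm_le_norm_latticeToEuclidean2 γ))
  set F : ℕ → (Fin 2 → ℤ) → ℝ := fun n k => ‖c k‖ ^ 2 *
    (‖latticeToEuclidean2 ((n : ℤ) • γ + k)‖ ^ α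
      - (n : ℝ) ^ α * ‖latticeToEuclidean2 γ‖ ^ α) ^ 2
  have hF_le : ∀ n k, F n k ≤ C ^ 2 * (1 + ‖latticeToEuclidean2 k‖) ^ (-(4 : ℝ)) := by
    intro n k
    by_cases hk : ∑ i, k i * γ i = 0
    · simp only [F, latticeToEuclidean2_zsmul_add, Int.cast_natCast]
      refine sq_mul_sq_rpow_norm_smul_add_sub_le (by simp [inner_latticeToEuclidean2, hk])
        n.cast_nonneg hα0.le hα2.le ?_
      simpa using hC k
    · rw [show F n k = 0 by simp [F, hsupp k hk]]
      positivity
  have hF_lim : ∀ k, Tendsto (fun n => F n k) atTop (𝓝 0) := by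
    intro k
    by_cases hk : ∑ i, k i * γ i = 0
    · simp only [F, latticeToEuclidean2_zsmul_add, Int.cast_natCast]
      simpa using ((tendsto_rpow_norm_smul_add_sub (by simp [inner_latticeToEuclidean2, hk])
        hγ' hα0.le hα2).comp tendsto_natCast_atTop_atTop).pow 2 |>.const_mul (‖c k‖ ^ 2)
    · simp [F, hsupp k hk]
  have hbound : Summable fun k => C ^ 2 * (1 + ‖latticeToEuclidean2 k‖) ^ (-(4 : ℝ)) :=
    (summable_one_add_norm_latticeToEuclidean2_rpow_neg (by norm_num)).mul_left _
  refine ⟨fun n => hbound.of_nonneg_of_le (fun k => by positivity) (hF_le n), ?_⟩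
  simpa only [tsum_zero] using tendsto_tsum_of_dominated_convergence hbound hF_lim
    (.of_forall fun n k => by rw [norm_of_nonneg (by positivity)]; exact hF_le n k)
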